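/- The 6-tuple x = (1/27)(1,1,1,8,8,8) is power majorized by y = (1/72)(1,1,8,8,27,27), i.e., ∑ x_i^p ≤ ∑ y_i^p for all real p ∉ [0,1] and ∑ x_i^p ≥ ∑ y_i^p for all p ∈ [0,1]; but x is not majorized by y, since the sum of the k largest entries of x exceeds that of y for some k. Hence power majorization does not imply majorization. -/

import Mathlib

open Real Finset


private lemma phi_nonneg (s : ℝ) (h0 : 0 ≤ s) (h1 : s ≤ 1) :
    0 ≤ 2 + 2*s^15 + 2*s^24 - 3*s^7 - 3*s^22 := by
  have k1 : 0 ≤ (1 - s^7)^2 * (2 + s^7) := by positivity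
  have k2 : 0 ≤ s^15 * (1 + s^6 + s^15 - 3*s^7) := by
    have : 0 ≤ 1 + s^6 + s^15 - 3*s^7 := by
      nlinarith [sq_nonneg (1 - s^3), sq_nonneg (s^3 - s^6), sq_nonneg (1 - s^6),
        mul_nonneg (mul_nonneg h0 h0) (sq_nonneg (1 - s^3)),
        pow_nonneg h0 6, pow_nonneg h0 7, pow_nonneg h0 15]
    positivity
  have k3 : 0 ≤ s^15 * ((1 - s^3) * (1 + s^3 - s^6 + s^9 + s^12)) := by
    have a1 : 0 ≤ 1 - s^3 := by nlinarith [pow_le_one₀ h0 h1 (n:=3)]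
    have a2 : 0 ≤ 1 + s^3 - s^6 + s^9 + s^12 := by
      have := pow_le_one₀ h0 h1 (n:=6)
      nlinarith [pow_nonneg h0 3, pow_nonneg h0 9, pow_nonneg h0 12]
    positivity
  nlinarith [k1, k2, k3]

private lemma phi_nonpos (e : ℝ) (he0 : 0 ≤ e) (he1 : e ≤ 9/100) :
    2 + 2*(1+e)^15 + 2*(1+e)^24 - 3*(1+e)^7 - 3*(1+e)^22 ≤ 0 := by
  have h2 : e^2 ≤ (9/100)^1*e := by
    calc e^2 = e^1*e := by ring
    _ ≤ (9/100)^1*e := by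
      apply mul_le_mul_of_nonneg_right _ he0
      exact pow_le_pow_left₀ he0 he1 _
  have h3 : e^3 ≤ (9/100)^2*e := by
    calc e^3 = e^2*e := by ring
    _ ≤ (9/100)^2*e := by
      apply mul_le_mul_of_nonneg_right _ he0
      exact pow_le_pow_left₀ he0 he1 _
  have h4 : e^4 ≤ (9/100)^3*e := by
    calc e^4 = e^3*e := by ring
    _ ≤ (9/100)^3*e := by
      apply mul_le_mul_of_nonneg_right _ he0
      exact pow_le_pow_left₀ he0 he1 _
  have h5 : e^5 ≤ (9/100)^4*e := by
    calc e^5 = e^4*e := by ring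
    _ ≤ (9/100)^4*e := by
      apply mul_le_mul_of_nonneg_right _ he0
      exact pow_le_pow_left₀ he0 he1 _
  have h6 : e^6 ≤ (9/100)^5*e := by
    calc e^6 = e^5*e := by ring
    _ ≤ (9/100)^5*e := by
      apply mul_le_mul_of_nonneg_right _ he0
      exact pow_le_pow_left₀ he0 he1 _
  have h7 : e^7 ≤ (9/100)^6*e := by
    calc e^7 = e^6*e := by ring
    _ ≤ (9/100)^6*e := by
      apply mul_le_mul_of_nonneg_right _ he0
      exact pow_le_pow_left₀ he0 he1 _
  have h8 : e^8 ≤ (9/100)^7*e := by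
    calc e^8 = e^7*e := by ring
    _ ≤ (9/100)^7*e := by
      apply mul_le_mul_of_nonneg_right _ he0
      exact pow_le_pow_left₀ he0 he1 _
  have h9 : e^9 ≤ (9/100)^8*e := by
    calc e^9 = e^8*e := by ring
    _ ≤ (9/100)^8*e := by
      apply mul_le_mul_of_nonneg_right _ he0
      exact pow_le_pow_left₀ he0 he1 _
  have h10 : e^10 ≤ (9/100)^9*e := by
    calc e^10 = e^9*e := by ring
    _ ≤ (9/100)^9*e := by
      apply mul_le_mul_of_nonneg_right _ he0
      exact pow_le_pow_left₀ he0 he1 _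
  have h11 : e^11 ≤ (9/100)^10*e := by
    calc e^11 = e^10*e := by ring
    _ ≤ (9/100)^10*e := by
      apply mul_le_mul_of_nonneg_right _ he0
      exact pow_le_pow_left₀ he0 he1 _
  have h12 : e^12 ≤ (9/100)^11*e := by
    calc e^12 = e^11*e := by ring
    _ ≤ (9/100)^11*e := by
      apply mul_le_mul_of_nonneg_right _ he0
      exact pow_le_pow_left₀ he0 he1 _
  have h13 : e^13 ≤ (9/100)^12*e := by
    calc e^13 = e^12*e := by ring
    _ ≤ (9/100)^12*e := by
      apply mul_le_mul_of_nonneg_right _ he0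
      exact pow_le_pow_left₀ he0 he1 _
  have h14 : e^14 ≤ (9/100)^13*e := by
    calc e^14 = e^13*e := by ring
    _ ≤ (9/100)^13*e := by
      apply mul_le_mul_of_nonneg_right _ he0
      exact pow_le_pow_left₀ he0 he1 _
  have h15 : e^15 ≤ (9/100)^14*e := by
    calc e^15 = e^14*e := by ring
    _ ≤ (9/100)^14*e := by
      apply mul_le_mul_of_nonneg_right _ he0
      exact pow_le_pow_left₀ he0 he1 _
  have h16 : e^16 ≤ (9/100)^15*e := by
    calc e^16 = e^15*e := by ring
    _ ≤ (9/100)^15*e := by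
      apply mul_le_mul_of_nonneg_right _ he0
      exact pow_le_pow_left₀ he0 he1 _
  have h17 : e^17 ≤ (9/100)^16*e := by
    calc e^17 = e^16*e := by ring
    _ ≤ (9/100)^16*e := by
      apply mul_le_mul_of_nonneg_right _ he0
      exact pow_le_pow_left₀ he0 he1 _
  have h18 : e^18 ≤ (9/100)^17*e := by
    calc e^18 = e^17*e := by ring
    _ ≤ (9/100)^17*e := by
      apply mul_le_mul_of_nonneg_right _ he0
      exact pow_le_pow_left₀ he0 he1 _
  have h19 : e^19 ≤ (9/100)^18*e := by
    calc e^19 = e^18*e := by ring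
    _ ≤ (9/100)^18*e := by
      apply mul_le_mul_of_nonneg_right _ he0
      exact pow_le_pow_left₀ he0 he1 _
  have h20 : e^20 ≤ (9/100)^19*e := by
    calc e^20 = e^19*e := by ring
    _ ≤ (9/100)^19*e := by
      apply mul_le_mul_of_nonneg_right _ he0
      exact pow_le_pow_left₀ he0 he1 _
  have h21 : e^21 ≤ (9/100)^20*e := by
    calc e^21 = e^20*e := by ring
    _ ≤ (9/100)^20*e := by
      apply mul_le_mul_of_nonneg_right _ he0
      exact pow_le_pow_left₀ he0 he1 _
  have h22 : e^22 ≤ (9/100)^21*e := by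
    calc e^22 = e^21*e := by ring
    _ ≤ (9/100)^21*e := by
      apply mul_le_mul_of_nonneg_right _ he0
      exact pow_le_pow_left₀ he0 he1 _
  have h23 : e^23 ≤ (9/100)^22*e := by
    calc e^23 = e^22*e := by ring
    _ ≤ (9/100)^22*e := by
      apply mul_le_mul_of_nonneg_right _ he0
      exact pow_le_pow_left₀ he0 he1 _
  have h24 : e^24 ≤ (9/100)^23*e := by
    calc e^24 = e^23*e := by ring
    _ ≤ (9/100)^23*e := by
      apply mul_le_mul_of_nonneg_right _ he0
      exact pow_le_pow_left₀ he0 he1 _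
  nlinarith [h2, h3, h4, h5, h6, h7, h8, h9, h10, h11, h12, h13, h14, h15, h16, h17, h18, h19, h20, h21, h22, h23, h24, he0]

private lemma q_nonneg (x : ℝ) (hx0 : 0 ≤ x) :
    0 ≤ 1 + 8*(1+x)^21 + 27*(1+x)^33 - 4*(1+x)^10 - 32*(1+x)^31 := by
  nlinarith [pow_nonneg hx0 1, pow_nonneg hx0 2, pow_nonneg hx0 3, pow_nonneg hx0 4, pow_nonneg hx0 5, pow_nonneg hx0 6, pow_nonneg hx0 7, pow_nonneg hx0 8, pow_nonneg hx0 9, pow_nonneg hx0 10, pow_nonneg hx0 11, pow_nonneg hx0 12, pow_nonneg hx0 13, pow_nonneg hx0 14, pow_nonneg hx0 15, pow_nonneg hx0 16, pow_nonneg hx0 17, pow_nonneg hx0 18, pow_nonneg hx0 19, pow_nonneg hx0 20, pow_nonneg hx0 21, pow_nonneg hx0 22, pow_nonneg hx0 23, pow_nonneg hx0 24, pow_nonneg hx0 25, pow_nonneg hx0 26, pow_nonneg hx0 27, pow_nonneg hx0 28, pow_nonneg hx0 29, pow_nonneg hx0 30, pow_nonneg hx0 31, pow_nonneg hx0 32,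 pow_nonneg hx0 33]

private lemma q_nonpos (e : ℝ) (he0 : 0 ≤ e) (he1 : e ≤ 1/25) :
    1 + 8*(1-e)^21 + 27*(1-e)^33 - 4*(1-e)^10 - 32*(1-e)^31 ≤ 0 := by
  have h4 : e^4 ≤ (1/25)^3*e := by
    calc e^4 = e^3*e := by ring
    _ ≤ (1/25)^3*e := by
      apply mul_le_mul_of_nonneg_right _ he0
      exact pow_le_pow_left₀ he0 he1 _
  have h6 : e^6 ≤ (1/25)^5*e := by
    calc e^6 = e^5*e := by ring
    _ ≤ (1/25)^5*e := by
      apply mul_le_mul_of_nonneg_right _ he0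
      exact pow_le_pow_left₀ he0 he1 _
  have h8 : e^8 ≤ (1/25)^7*e := by
    calc e^8 = e^7*e := by ring
    _ ≤ (1/25)^7*e := by
      apply mul_le_mul_of_nonneg_right _ he0
      exact pow_le_pow_left₀ he0 he1 _
  have h10 : e^10 ≤ (1/25)^9*e := by
    calc e^10 = e^9*e := by ring
    _ ≤ (1/25)^9*e := by
      apply mul_le_mul_of_nonneg_right _ he0
      exact pow_le_pow_left₀ he0 he1 _
  have h12 : e^12 ≤ (1/25)^11*e := by
    calc e^12 = e^11*e := by ring
    _ ≤ (1/25)^11*e := by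
      apply mul_le_mul_of_nonneg_right _ he0
      exact pow_le_pow_left₀ he0 he1 _
  have h14 : e^14 ≤ (1/25)^13*e := by
    calc e^14 = e^13*e := by ring
    _ ≤ (1/25)^13*e := by
      apply mul_le_mul_of_nonneg_right _ he0
      exact pow_le_pow_left₀ he0 he1 _
  have h16 : e^16 ≤ (1/25)^15*e := by
    calc e^16 = e^15*e := by ring
    _ ≤ (1/25)^15*e := by
      apply mul_le_mul_of_nonneg_right _ he0
      exact pow_le_pow_left₀ he0 he1 _
  have h18 : e^18 ≤ (1/25)^17*e := by
    calc e^18 = e^17*e := by ring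
    _ ≤ (1/25)^17*e := by
      apply mul_le_mul_of_nonneg_right _ he0
      exact pow_le_pow_left₀ he0 he1 _
  have h20 : e^20 ≤ (1/25)^19*e := by
    calc e^20 = e^19*e := by ring
    _ ≤ (1/25)^19*e := by
      apply mul_le_mul_of_nonneg_right _ he0
      exact pow_le_pow_left₀ he0 he1 _
  have h22 : e^22 ≤ (1/25)^21*e := by
    calc e^22 = e^21*e := by ring
    _ ≤ (1/25)^21*e := by
      apply mul_le_mul_of_nonneg_right _ he0
      exact pow_le_pow_left₀ he0 he1 _
  have h24 : e^24 ≤ (1/25)^23*e := by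
    calc e^24 = e^23*e := by ring
    _ ≤ (1/25)^23*e := by
      apply mul_le_mul_of_nonneg_right _ he0
      exact pow_le_pow_left₀ he0 he1 _
  have h26 : e^26 ≤ (1/25)^25*e := by
    calc e^26 = e^25*e := by ring
    _ ≤ (1/25)^25*e := by
      apply mul_le_mul_of_nonneg_right _ he0
      exact pow_le_pow_left₀ he0 he1 _
  have h28 : e^28 ≤ (1/25)^27*e := by
    calc e^28 = e^27*e := by ring
    _ ≤ (1/25)^27*e := by
      apply mul_le_mul_of_nonneg_right _ he0
      exact pow_le_pow_left₀ he0 he1 _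
  have h30 : e^30 ≤ (1/25)^29*e := by
    calc e^30 = e^29*e := by ring
    _ ≤ (1/25)^29*e := by
      apply mul_le_mul_of_nonneg_right _ he0
      exact pow_le_pow_left₀ he0 he1 _
  have h32 : e^32 ≤ (1/25)^31*e := by
    calc e^32 = e^31*e := by ring
    _ ≤ (1/25)^31*e := by
      apply mul_le_mul_of_nonneg_right _ he0
      exact pow_le_pow_left₀ he0 he1 _
  have hn5 : (0:ℝ) ≤ e^5 := pow_nonneg he0 _
  have hn7 : (0:ℝ) ≤ e^7 := pow_nonneg he0 _
  have hn9 : (0:ℝ) ≤ e^9 := pow_nonneg he0 _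
  have hn11 : (0:ℝ) ≤ e^11 := pow_nonneg he0 _
  have hn13 : (0:ℝ) ≤ e^13 := pow_nonneg he0 _
  have hn15 : (0:ℝ) ≤ e^15 := pow_nonneg he0 _
  have hn17 : (0:ℝ) ≤ e^17 := pow_nonneg he0 _
  have hn19 : (0:ℝ) ≤ e^19 := pow_nonneg he0 _
  have hn21 : (0:ℝ) ≤ e^21 := pow_nonneg he0 _
  have hn23 : (0:ℝ) ≤ e^23 := pow_nonneg he0 _
  have hn25 : (0:ℝ) ≤ e^25 := pow_nonneg he0 _
  have hn27 : (0:ℝ) ≤ e^27 := pow_nonneg he0 _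
  have hn29 : (0:ℝ) ≤ e^29 := pow_nonneg he0 _
  have hn31 : (0:ℝ) ≤ e^31 := pow_nonneg he0 _
  have hn33 : (0:ℝ) ≤ e^33 := pow_nonneg he0 _
  have hsq : 0 ≤ e * (e - 876/27264)^2 := mul_nonneg he0 (sq_nonneg _)
  nlinarith [h4, h6, h8, h10, h12, h14, h16, h18, h20, h22, h24, h26, h28, h30, h32, hn5, hn7, hn9, hn11, hn13, hn15, hn17, hn19, hn21, hn23, hn25, hn27, hn29, hn31, hn33, hsq, he0]

/- ### rpow helpers -/

private lemma pow_rpow_comm (x : ℝ) (hx : 0 ≤ x) (q : ℝ) (n : ℕ) :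
    (x ^ q) ^ n = x ^ (q * n) := by
  rw [← Real.rpow_natCast (x ^ q) n, ← Real.rpow_mul hx]

private lemma rpow_base_pow (x : ℝ) (hx : 0 ≤ x) (n : ℕ) (p : ℝ) :
    ((x ^ n : ℝ)) ^ p = (x ^ p) ^ n := by
  rw [← Real.rpow_natCast x n, ← Real.rpow_mul hx, mul_comm, Real.rpow_mul hx,
    Real.rpow_natCast]

/- ### The four cases -/

private lemma case_nonpos (p : ℝ) (hp : p ≤ 0) :
    3*(8:ℝ)^p + 3*(64:ℝ)^p ≤ 2*(3:ℝ)^p + 2*(24:ℝ)^p + 2*(81:ℝ)^p := by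
  set s : ℝ := (2:ℝ) ^ (p/5) with hs
  have hs0 : 0 < s := Real.rpow_pos_of_pos (by norm_num) _
  have hs1 : s ≤ 1 := Real.rpow_le_one_of_one_le_of_nonpos (by norm_num) (by linarith)
  have hb0 : (0:ℝ) < (3:ℝ)^p := Real.rpow_pos_of_pos (by norm_num) _
  have h8 : (8:ℝ)^p = s^15 := by
    rw [show (8:ℝ) = 2^(3:ℕ) by norm_num, ← Real.rpow_natCast 2 3, ← Real.rpow_mul (by norm_num),
      hs, pow_rpow_comm 2 (by norm_num) (p/5) 15]
    congr 1; push_cast; ring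
  have h64 : (64:ℝ)^p = s^30 := by
    rw [show (64:ℝ) = 2^(6:ℕ) by norm_num, ← Real.rpow_natCast 2 6, ← Real.rpow_mul (by norm_num),
      hs, pow_rpow_comm 2 (by norm_num) (p/5) 30]
    congr 1; push_cast; ring
  have h24 : (24:ℝ)^p = s^15 * (3:ℝ)^p := by
    rw [show (24:ℝ) = 8*3 by norm_num, Real.mul_rpow (by norm_num) (by norm_num), h8]
  have h81 : (81:ℝ)^p = ((3:ℝ)^p)^4 := by
    rw [show (81:ℝ) = 3^(4:ℕ) by norm_num, rpow_base_pow 3 (by norm_num) 4 p]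
  have hb : s^8 ≤ (3:ℝ)^p := by
    have h5 : (s^8)^5 ≤ ((3:ℝ)^p)^5 := by
      have e1 : ((3:ℝ)^p)^5 = (243:ℝ)^p := by
        rw [show (243:ℝ) = 3^(5:ℕ) by norm_num, rpow_base_pow 3 (by norm_num) 5 p]
      have e2 : (s^8)^5 = (256:ℝ)^p := by
        rw [hs, pow_rpow_comm 2 (by norm_num) (p/5) 8, pow_rpow_comm 2 (by norm_num) _ 5,
          show (256:ℝ) = 2^(8:ℕ) by norm_num, ← Real.rpow_natCast 2 8,
          ← Real.rpow_mul (by norm_num)]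
        congr 1; push_cast; ring
      rw [e1, e2]
      exact Real.rpow_le_rpow_of_nonpos (by norm_num) (by norm_num) hp
    exact le_of_pow_le_pow_left₀ (by norm_num) hb0.le h5
  have hphi := phi_nonneg s hs0.le hs1
  rw [h8, h64, h24, h81]
  set b := (3:ℝ)^p
  have h4 : (s^8)^4 ≤ b^4 := pow_le_pow_left₀ (by positivity) hb 4
  nlinarith [mul_nonneg (pow_nonneg hs0.le 8) hphi, pow_nonneg hs0.le 15,
    mul_nonneg (pow_nonneg hs0.le 15) (sub_nonneg.2 hb)]

private lemma case_low (p : ℝ) (h0 : 0 ≤ p) (h1 : p ≤ 3/5) :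
    2*(3:ℝ)^p + 2*(24:ℝ)^p + 2*(81:ℝ)^p ≤ 3*(8:ℝ)^p + 3*(64:ℝ)^p := by
  set s : ℝ := (2:ℝ) ^ (p/5) with hs
  have hs0 : 0 < s := Real.rpow_pos_of_pos (by norm_num) _
  have hs1 : 1 ≤ s := Real.one_le_rpow (by norm_num) (by linarith)
  have hb0 : (0:ℝ) < (3:ℝ)^p := Real.rpow_pos_of_pos (by norm_num) _
  have h8 : (8:ℝ)^p = s^15 := by
    rw [show (8:ℝ) = 2^(3:ℕ) by norm_num, ← Real.rpow_natCast 2 3, ← Real.rpow_mul (by norm_num),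
      hs, pow_rpow_comm 2 (by norm_num) (p/5) 15]
    congr 1; push_cast; ring
  have h64 : (64:ℝ)^p = s^30 := by
    rw [show (64:ℝ) = 2^(6:ℕ) by norm_num, ← Real.rpow_natCast 2 6, ← Real.rpow_mul (by norm_num),
      hs, pow_rpow_comm 2 (by norm_num) (p/5) 30]
    congr 1; push_cast; ring
  have h24 : (24:ℝ)^p = s^15 * (3:ℝ)^p := by
    rw [show (24:ℝ) = 8*3 by norm_num, Real.mul_rpow (by norm_num) (by norm_num), h8]
  have h81 : (81:ℝ)^p = ((3:ℝ)^p)^4 := by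
    rw [show (81:ℝ) = 3^(4:ℕ) by norm_num, rpow_base_pow 3 (by norm_num) 4 p]
  -- s ≤ 109/100
  have hs109 : s ≤ 109/100 := by
    have h25 : s^25 ≤ (109/100:ℝ)^25 := by
      have e2 : s^25 = (2:ℝ)^(5*p) := by
        rw [hs, pow_rpow_comm 2 (by norm_num) (p/5) 25]
        congr 1; push_cast; ring
      have : (2:ℝ)^(5*p) ≤ (2:ℝ)^(3:ℝ) :=
        Real.rpow_le_rpow_of_exponent_le (by norm_num) (by linarith)
      have h23 : (2:ℝ)^(3:ℝ) = 8 := by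
        rw [show (3:ℝ) = ((3:ℕ):ℝ) by norm_num, Real.rpow_natCast]; norm_num
      rw [e2]
      calc (2:ℝ)^(5*p) ≤ 8 := by rw [← h23]; exact this
      _ ≤ (109/100:ℝ)^25 := by norm_num
    exact le_of_pow_le_pow_left₀ (by norm_num) (by norm_num) h25
  -- b ≤ s^8
  have hb : (3:ℝ)^p ≤ s^8 := by
    have h5 : ((3:ℝ)^p)^5 ≤ (s^8)^5 := by
      have e1 : ((3:ℝ)^p)^5 = (243:ℝ)^p := by
        rw [show (243:ℝ) = 3^(5:ℕ) by norm_num, rpow_base_pow 3 (by norm_num) 5 p]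
      have e2 : (s^8)^5 = (256:ℝ)^p := by
        rw [hs, pow_rpow_comm 2 (by norm_num) (p/5) 8, pow_rpow_comm 2 (by norm_num) _ 5,
          show (256:ℝ) = 2^(8:ℕ) by norm_num, ← Real.rpow_natCast 2 8,
          ← Real.rpow_mul (by norm_num)]
        congr 1; push_cast; ring
      rw [e1, e2]
      exact Real.rpow_le_rpow (by norm_num) (by norm_num) h0
    exact le_of_pow_le_pow_left₀ (by norm_num) (by positivity) h5
  have hphi' := phi_nonpos (s-1) (by linarith) (by linarith)
  have hphi : 2 + 2*s^15 + 2*s^24 - 3*s^7 - 3*s^22 ≤ 0 := by nlinarith [hphi']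
  rw [h8, h64, h24, h81]
  set b := (3:ℝ)^p
  have h4 : b^4 ≤ (s^8)^4 := pow_le_pow_left₀ hb0.le hb 4
  nlinarith [mul_nonpos_of_nonneg_of_nonpos (pow_nonneg hs0.le 8) hphi, pow_nonneg hs0.le 15,
    mul_nonneg (pow_nonneg hs0.le 15) (sub_nonneg.2 hb)]

private lemma case_high (p : ℝ) (h0 : 3/5 ≤ p) (h1 : p ≤ 1) :
    2*(3:ℝ)^p + 2*(24:ℝ)^p + 2*(81:ℝ)^p ≤ 3*(8:ℝ)^p + 3*(64:ℝ)^p := by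
  set s : ℝ := (2:ℝ) ^ ((p-1)/7) with hs
  have hs0 : 0 < s := Real.rpow_pos_of_pos (by norm_num) _
  have hs1 : s ≤ 1 := Real.rpow_le_one_of_one_le_of_nonpos (by norm_num) (by linarith)
  have hb0 : (0:ℝ) < (3:ℝ)^p := Real.rpow_pos_of_pos (by norm_num) _
  have ha : (2:ℝ)^p = 2*s^7 := by
    rw [hs, pow_rpow_comm 2 (by norm_num) ((p-1)/7) 7,
      show ((p-1)/7*(7:ℕ)) = p - 1 by push_cast; ring,
      show p = 1 + (p-1) by ring, Real.rpow_add (by norm_num), Real.rpow_one]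
    ring_nf
  have h8 : (8:ℝ)^p = 8*s^21 := by
    rw [show (8:ℝ) = 2^(3:ℕ) by norm_num, rpow_base_pow 2 (by norm_num) 3 p, ha]; ring
  have h64 : (64:ℝ)^p = 64*s^42 := by
    rw [show (64:ℝ) = 2^(6:ℕ) by norm_num, rpow_base_pow 2 (by norm_num) 6 p, ha]; ring
  have h24 : (24:ℝ)^p = 8*s^21 * (3:ℝ)^p := by
    rw [show (24:ℝ) = 8*3 by norm_num, Real.mul_rpow (by norm_num) (by norm_num), h8]
  have h81 : (81:ℝ)^p = ((3:ℝ)^p)^4 := by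
    rw [show (81:ℝ) = 3^(4:ℕ) by norm_num, rpow_base_pow 3 (by norm_num) 4 p]
  -- 24/25 ≤ s
  have hs24 : 24/25 ≤ s := by
    have h35 : (24/25:ℝ)^35 ≤ s^35 := by
      have e2 : s^35 = (2:ℝ)^(5*(p-1)) := by
        rw [hs, pow_rpow_comm 2 (by norm_num) ((p-1)/7) 35]
        congr 1; push_cast; ring
      have hlow : (2:ℝ)^((-2):ℝ) ≤ (2:ℝ)^(5*(p-1)) :=
        Real.rpow_le_rpow_of_exponent_le (by norm_num) (by linarith)
      have hm2 : (2:ℝ)^((-2):ℝ) = 1/4 := by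
        rw [show ((-2):ℝ) = ((-2:ℤ):ℝ) by norm_num, Real.rpow_intCast]; norm_num
      rw [e2]
      calc (24/25:ℝ)^35 ≤ 1/4 := by norm_num
      _ ≤ (2:ℝ)^(5*(p-1)) := by rw [← hm2]; exact hlow
    exact le_of_pow_le_pow_left₀ (by norm_num) hs0.le h35
  -- b ≤ 3 s^11
  have hb : (3:ℝ)^p ≤ 3*s^11 := by
    have h7 : ((3:ℝ)^p)^7 ≤ (3*s^11)^7 := by
      have e1 : ((3:ℝ)^p)^7 = 2187*(2187:ℝ)^(p-1) := by
        rw [show ((3:ℝ)^p)^7 = ((3^(7:ℕ):ℝ))^p by rw [rpow_base_pow 3 (by norm_num) 7 p],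
          show ((3:ℝ)^(7:ℕ)) = 2187 by norm_num,
          show p = 1 + (p-1) by ring, Real.rpow_add (by norm_num), Real.rpow_one]
        ring_nf
      have e2 : (s^11)^7 = (2048:ℝ)^(p-1) := by
        rw [hs, pow_rpow_comm 2 (by norm_num) ((p-1)/7) 11, pow_rpow_comm 2 (by norm_num) _ 7,
          show (2048:ℝ) = 2^(11:ℕ) by norm_num, ← Real.rpow_natCast 2 11,
          ← Real.rpow_mul (by norm_num)]
        congr 1; push_cast; ring
      have cmp : (2187:ℝ)^(p-1) ≤ (2048:ℝ)^(p-1) :=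
        Real.rpow_le_rpow_of_nonpos (by norm_num) (by norm_num) (by linarith)
      calc ((3:ℝ)^p)^7 = 2187*(2187:ℝ)^(p-1) := e1
      _ ≤ 2187*(2048:ℝ)^(p-1) := by nlinarith [cmp]
      _ = 2187*(s^11)^7 := by rw [e2]
      _ = (3*s^11)^7 := by ring
    exact le_of_pow_le_pow_left₀ (by norm_num) (by positivity) h7
  have hq' := q_nonpos (1-s) (by linarith) (by linarith)
  have hq : 1 + 8*s^21 + 27*s^33 - 4*s^10 - 32*s^31 ≤ 0 := by nlinarith [hq']
  rw [h8, h64, h24, h81]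
  set b := (3:ℝ)^p
  have h4 : b^4 ≤ (3*s^11)^4 := pow_le_pow_left₀ hb0.le hb 4
  nlinarith [mul_nonpos_of_nonneg_of_nonpos (pow_nonneg hs0.le 11) hq, pow_nonneg hs0.le 21,
    mul_nonneg (pow_nonneg hs0.le 21) (sub_nonneg.2 hb)]

private lemma case_ge_one (p : ℝ) (h1 : 1 ≤ p) :
    3*(8:ℝ)^p + 3*(64:ℝ)^p ≤ 2*(3:ℝ)^p + 2*(24:ℝ)^p + 2*(81:ℝ)^p := by
  set s : ℝ := (2:ℝ) ^ ((p-1)/7) with hs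
  have hs0 : 0 < s := Real.rpow_pos_of_pos (by norm_num) _
  have hs1 : 1 ≤ s := Real.one_le_rpow (by norm_num) (by linarith)
  have hb0 : (0:ℝ) < (3:ℝ)^p := Real.rpow_pos_of_pos (by norm_num) _
  have ha : (2:ℝ)^p = 2*s^7 := by
    rw [hs, pow_rpow_comm 2 (by norm_num) ((p-1)/7) 7,
      show ((p-1)/7*(7:ℕ)) = p - 1 by push_cast; ring,
      show p = 1 + (p-1) by ring, Real.rpow_add (by norm_num), Real.rpow_one]
    ring_nf
  have h8 : (8:ℝ)^p = 8*s^21 := by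
    rw [show (8:ℝ) = 2^(3:ℕ) by norm_num, rpow_base_pow 2 (by norm_num) 3 p, ha]; ring
  have h64 : (64:ℝ)^p = 64*s^42 := by
    rw [show (64:ℝ) = 2^(6:ℕ) by norm_num, rpow_base_pow 2 (by norm_num) 6 p, ha]; ring
  have h24 : (24:ℝ)^p = 8*s^21 * (3:ℝ)^p := by
    rw [show (24:ℝ) = 8*3 by norm_num, Real.mul_rpow (by norm_num) (by norm_num), h8]
  have h81 : (81:ℝ)^p = ((3:ℝ)^p)^4 := by
    rw [show (81:ℝ) = 3^(4:ℕ) by norm_num, rpow_base_pow 3 (by norm_num) 4 p]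
  -- b ≥ 3 s^11
  have hb : 3*s^11 ≤ (3:ℝ)^p := by
    have h7 : (3*s^11)^7 ≤ ((3:ℝ)^p)^7 := by
      have e1 : ((3:ℝ)^p)^7 = 2187*(2187:ℝ)^(p-1) := by
        rw [show ((3:ℝ)^p)^7 = ((3^(7:ℕ):ℝ))^p by rw [rpow_base_pow 3 (by norm_num) 7 p],
          show ((3:ℝ)^(7:ℕ)) = 2187 by norm_num,
          show p = 1 + (p-1) by ring, Real.rpow_add (by norm_num), Real.rpow_one]
        ring_nf
      have e2 : (s^11)^7 = (2048:ℝ)^(p-1) := by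
        rw [hs, pow_rpow_comm 2 (by norm_num) ((p-1)/7) 11, pow_rpow_comm 2 (by norm_num) _ 7,
          show (2048:ℝ) = 2^(11:ℕ) by norm_num, ← Real.rpow_natCast 2 11,
          ← Real.rpow_mul (by norm_num)]
        congr 1; push_cast; ring
      have cmp : (2048:ℝ)^(p-1) ≤ (2187:ℝ)^(p-1) :=
        Real.rpow_le_rpow (by norm_num) (by norm_num) (by linarith)
      calc (3*s^11)^7 = 2187*(s^11)^7 := by ring
      _ = 2187*(2048:ℝ)^(p-1) := by rw [e2]
      _ ≤ 2187*(2187:ℝ)^(p-1) := by nlinarith [cmp]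
      _ = ((3:ℝ)^p)^7 := e1.symm
    exact le_of_pow_le_pow_left₀ (by norm_num) hb0.le h7
  have hq' := q_nonneg (s-1) (by linarith)
  have hq : 0 ≤ 1 + 8*s^21 + 27*s^33 - 4*s^10 - 32*s^31 := by nlinarith [hq']
  rw [h8, h64, h24, h81]
  set b := (3:ℝ)^p
  have h4 : (3*s^11)^4 ≤ b^4 := pow_le_pow_left₀ (by positivity) hb 4
  nlinarith [mul_nonneg (pow_nonneg hs0.le 11) hq, pow_nonneg hs0.le 21,
    mul_nonneg (pow_nonneg hs0.le 21) (sub_nonneg.2 hb)]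

/- ### main theorem -/

theorem power_majorization_not_majorization :
    ∃ x y : Fin 6 → ℝ,
      x = ![1 / 27, 1 / 27, 1 / 27, 8 / 27, 8 / 27, 8 / 27] ∧
      y = ![1 / 72, 1 / 72, 8 / 72, 8 / 72, 27 / 72, 27 / 72] ∧
      (∀ p : ℝ, p < 0 ∨ 1 < p → ∑ i, x i ^ p ≤ ∑ i, y i ^ p) ∧
      (∀ p : ℝ, 0 ≤ p → p ≤ 1 → ∑ i, y i ^ p ≤ ∑ i, x i ^ p) ∧
      ¬ ((∀ s : Finset (Fin 6), ∃ t : Finset (Fin 6), t.card = s.card ∧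
            ∑ i ∈ s, x i ≤ ∑ i ∈ t, y i) ∧ ∑ i, x i = ∑ i, y i) := by
  refine ⟨![1 / 27, 1 / 27, 1 / 27, 8 / 27, 8 / 27, 8 / 27],
    ![1 / 72, 1 / 72, 8 / 72, 8 / 72, 27 / 72, 27 / 72], rfl, rfl, ?_, ?_, ?_⟩
  · intro p hp
    have h216 : (0:ℝ) < (216:ℝ)^p := Real.rpow_pos_of_pos (by norm_num) p
    apply le_of_mul_le_mul_right _ h216
    have e1 : ((1/27:ℝ))^p * 216^p = 8^p := by
      rw [← Real.mul_rpow (by norm_num) (by norm_num)]; norm_num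
    have e2 : ((8/27:ℝ))^p * 216^p = 64^p := by
      rw [← Real.mul_rpow (by norm_num) (by norm_num)]; norm_num
    have e3 : ((1/72:ℝ))^p * 216^p = 3^p := by
      rw [← Real.mul_rpow (by norm_num) (by norm_num)]; norm_num
    have e4 : ((8/72:ℝ))^p * 216^p = 24^p := by
      rw [← Real.mul_rpow (by norm_num) (by norm_num)]; norm_num
    have e5 : ((27/72:ℝ))^p * 216^p = 81^p := by
      rw [← Real.mul_rpow (by norm_num) (by norm_num)]; norm_num
    have key : 3*(8:ℝ)^p + 3*(64:ℝ)^p ≤ 2*(3:ℝ)^p + 2*(24:ℝ)^p + 2*(81:ℝ)^p := by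
      rcases hp with h | h
      · exact case_nonpos p h.le
      · exact case_ge_one p h.le
    have hxs : (∑ i, (![1 / 27, 1 / 27, 1 / 27, 8 / 27, 8 / 27, 8 / 27] : Fin 6 → ℝ) i ^ p)
        = 3*(1/27:ℝ)^p + 3*(8/27:ℝ)^p := by
      simp [Fin.sum_univ_succ, Matrix.cons_val_zero, Matrix.cons_val_succ]
      ring
    have hys : (∑ i, (![1 / 72, 1 / 72, 8 / 72, 8 / 72, 27 / 72, 27 / 72] : Fin 6 → ℝ) i ^ p)
        = 2*(1/72:ℝ)^p + 2*(8/72:ℝ)^p + 2*(27/72:ℝ)^p := by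
      simp [Fin.sum_univ_succ, Matrix.cons_val_zero, Matrix.cons_val_succ]
      ring
    rw [hxs, hys]
    calc (3*(1/27:ℝ)^p + 3*(8/27:ℝ)^p) * 216^p
        = 3*((1/27:ℝ)^p * 216^p) + 3*((8/27:ℝ)^p * 216^p) := by ring
      _ = 3*(8:ℝ)^p + 3*(64:ℝ)^p := by rw [e1, e2]
      _ ≤ 2*(3:ℝ)^p + 2*(24:ℝ)^p + 2*(81:ℝ)^p := key
      _ = 2*((1/72:ℝ)^p * 216^p) + 2*((8/72:ℝ)^p * 216^p) + 2*((27/72:ℝ)^p * 216^p) := by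
          rw [e3, e4, e5]
      _ = (2*(1/72:ℝ)^p + 2*(8/72:ℝ)^p + 2*(27/72:ℝ)^p) * 216^p := by ring
  · intro p hp0 hp1
    have h216 : (0:ℝ) < (216:ℝ)^p := Real.rpow_pos_of_pos (by norm_num) p
    apply le_of_mul_le_mul_right _ h216
    have e1 : ((1/27:ℝ))^p * 216^p = 8^p := by
      rw [← Real.mul_rpow (by norm_num) (by norm_num)]; norm_num
    have e2 : ((8/27:ℝ))^p * 216^p = 64^p := by
      rw [← Real.mul_rpow (by norm_num) (by norm_num)]; norm_num
    have e3 : ((1/72:ℝ))^p * 216^p = 3^p := by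
      rw [← Real.mul_rpow (by norm_num) (by norm_num)]; norm_num
    have e4 : ((8/72:ℝ))^p * 216^p = 24^p := by
      rw [← Real.mul_rpow (by norm_num) (by norm_num)]; norm_num
    have e5 : ((27/72:ℝ))^p * 216^p = 81^p := by
      rw [← Real.mul_rpow (by norm_num) (by norm_num)]; norm_num
    have key : 2*(3:ℝ)^p + 2*(24:ℝ)^p + 2*(81:ℝ)^p ≤ 3*(8:ℝ)^p + 3*(64:ℝ)^p := by
      rcases le_total p (3/5) with h | h
      · exact case_low p hp0 h
      · exact case_high p h hp1
    have hxs : (∑ i, (![1 / 27, 1 / 27, 1 / 27, 8 / 27, 8 / 27, 8 / 27] : Fin 6 → ℝ) i ^ p)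
        = 3*(1/27:ℝ)^p + 3*(8/27:ℝ)^p := by
      simp [Fin.sum_univ_succ, Matrix.cons_val_zero, Matrix.cons_val_succ]
      ring
    have hys : (∑ i, (![1 / 72, 1 / 72, 8 / 72, 8 / 72, 27 / 72, 27 / 72] : Fin 6 → ℝ) i ^ p)
        = 2*(1/72:ℝ)^p + 2*(8/72:ℝ)^p + 2*(27/72:ℝ)^p := by
      simp [Fin.sum_univ_succ, Matrix.cons_val_zero, Matrix.cons_val_succ]
      ring
    rw [hxs, hys]
    calc (2*(1/72:ℝ)^p + 2*(8/72:ℝ)^p + 2*(27/72:ℝ)^p) * 216^p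
        = 2*((1/72:ℝ)^p * 216^p) + 2*((8/72:ℝ)^p * 216^p) + 2*((27/72:ℝ)^p * 216^p) := by ring
      _ = 2*(3:ℝ)^p + 2*(24:ℝ)^p + 2*(81:ℝ)^p := by rw [e3, e4, e5]
      _ ≤ 3*(8:ℝ)^p + 3*(64:ℝ)^p := key
      _ = 3*((1/27:ℝ)^p * 216^p) + 3*((8/27:ℝ)^p * 216^p) := by rw [e1, e2]
      _ = (3*(1/27:ℝ)^p + 3*(8/27:ℝ)^p) * 216^p := by ring
  · rintro ⟨h1, -⟩
    obtain ⟨t, ht, hle⟩ := h1 {3, 4, 5}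
    have hmax : ∀ u : Finset (Fin 6), u.card = 3 →
        (∑ i ∈ u, (![1,1,8,8,27,27] : Fin 6 → ℕ) i) ≤ 62 := by decide
    have hcard : ({3,4,5} : Finset (Fin 6)).card = 3 := by decide
    rw [hcard] at ht
    have hyval : ∀ i, (![1 / 72, 1 / 72, 8 / 72, 8 / 72, 27 / 72, 27 / 72] : Fin 6 → ℝ) i
        = ((![1,1,8,8,27,27] : Fin 6 → ℕ) i : ℝ) / 72 := by
      intro i; fin_cases i <;> norm_num
    have hy62 : ∑ i ∈ t, (![1 / 72, 1 / 72, 8 / 72, 8 / 72, 27 / 72, 27 / 72] : Fin 6 → ℝ) i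
        ≤ 62/72 := by
      calc ∑ i ∈ t, (![1 / 72, 1 / 72, 8 / 72, 8 / 72, 27 / 72, 27 / 72] : Fin 6 → ℝ) i
          = ((∑ i ∈ t, (![1,1,8,8,27,27] : Fin 6 → ℕ) i : ℕ) : ℝ) / 72 := by
            rw [Finset.sum_congr rfl (fun i _ => hyval i), ← Finset.sum_div]
            push_cast
            rfl
        _ ≤ 62/72 := by
            have := hmax t ht
            have : ((∑ i ∈ t, (![1,1,8,8,27,27] : Fin 6 → ℕ) i : ℕ) : ℝ) ≤ 62 := by
              exact_mod_cast this
            linarith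
    have hxsum : ∑ i ∈ ({3,4,5} : Finset (Fin 6)),
        (![1 / 27, 1 / 27, 1 / 27, 8 / 27, 8 / 27, 8 / 27] : Fin 6 → ℝ) i = 8/9 := by
      rw [show ({3,4,5} : Finset (Fin 6)) = insert 3 (insert 4 {5}) from rfl,
        Finset.sum_insert (by decide), Finset.sum_insert (by decide), Finset.sum_singleton]
      norm_num [show ((![1 / 27, 1 / 27, 1 / 27, 8 / 27, 8 / 27, 8 / 27] : Fin 6 → ℝ) 3) = 8/27 from rfl,
        show ((![1 / 27, 1 / 27, 1 / 27, 8 / 27, 8 / 27, 8 / 27] : Fin 6 → ℝ) 4) = 8/27 from rfl,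
        show ((![1 / 27, 1 / 27, 1 / 27, 8 / 27, 8 / 27, 8 / 27] : Fin 6 → ℝ) 5) = 8/27 from rfl]
    rw [hxsum] at hle
    linarith
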